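/- If T is a finite connected (4-adjacency) subset of ℤ² containing two cells (i,j) and (i',j') with |i−i'| = 1 and |j−j'| = 1, then at least one of (1,1) and (−1,1) is a conflicting vector for T, i.e., T ∩ (T+(1,1)) ≠ ∅ or T ∩ (T+(−1,1)) ≠ ∅. -/
import Mathlib

theorem stmt_12 (T : Finset (ℤ × ℤ))
    (h : ∃ a ∈ T, ∃ b ∈ T, |a.1 - b.1| = 1 ∧ |a.2 - b.2| = 1) :
    (∃ x ∈ T, (x.1 + 1, x.2 + 1) ∈ T) ∨ (∃ x ∈ T, (x.1 - 1, x.2 + 1) ∈ T) := by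
  obtain ⟨a, ha, b, hb, h1, h2⟩ := h
  rcases abs_eq (by norm_num) |>.mp h1 with e1 | e1 <;>
  rcases abs_eq (by norm_num) |>.mp h2 with e2 | e2
  · left; exact ⟨b, hb, by
      have : (b.1 + 1, b.2 + 1) = a := by ext <;> simp <;> omega
      rwa [this]⟩
  · right; exact ⟨a, ha, by
      have : (a.1 - 1, a.2 + 1) = b := by ext <;> simp <;> omega
      rwa [this]⟩
  · right; exact ⟨b, hb, by
      have : (b.1 - 1, b.2 + 1) = a := by ext <;> simp <;> omega
      rwa [this]⟩
  · left; exact ⟨a, ha, by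
      have : (a.1 + 1, a.2 + 1) = b := by ext <;> simp <;> omega
      rwa [this]⟩
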